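/- arXiv:1703.08625 — 5 statements merged into one kernel-verified Lean document; each statement's English description precedes it below -/
import Mathlib

section
/- For every assignment σ : Fin n → Bool and every clause index i ∈ Fin m, the run of the Tsitsiklis–Papadimitriou transition system started at state A'_{i1} and evolving according to σ reaches, after exactly 2n steps, the state A_{n+1} if σ satisfies clause i (i.e., there exists j with C i j = some (σ j)), and reaches the state A'_{n+1} otherwise. -/
/-- States of the Tsitsiklis–Papadimitriou transition system for a QBF instance
with `m` clauses and `n` variables: `s0`; `A i j`, `A' i j`, `T i j`, `T' i j`,
`F i j`, `F' i j` for `i : Fin m`, `j : Fin n`; and the two final states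
`Afin` (= A_{n+1}) and `A'fin` (= A'_{n+1}). -/
inductive TPState (m n : ℕ) : Type where
  | s0 : TPState m n
  | A (i : Fin m) (j : Fin n) : TPState m n
  | A' (i : Fin m) (j : Fin n) : TPState m n
  | T (i : Fin m) (j : Fin n) : TPState m n
  | T' (i : Fin m) (j : Fin n) : TPState m n
  | F (i : Fin m) (j : Fin n) : TPState m n
  | F' (i : Fin m) (j : Fin n) : TPState m n
  | Afin : TPState m n
  | A'fin : TPState m n
  deriving DecidableEq

/-- `A_{i,j+1}`, where `A_{i,n+1}` denotes the state `A_{n+1}`. -/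
def TPState.nextA {m n : ℕ} (i : Fin m) (j : Fin n) : TPState m n :=
  if h : (j : ℕ) + 1 < n then .A i ⟨(j : ℕ) + 1, h⟩ else .Afin

/-- `A'_{i,j+1}`, where `A'_{i,n+1}` denotes the state `A'_{n+1}`. -/
def TPState.nextA' {m n : ℕ} (i : Fin m) (j : Fin n) : TPState m n :=
  if h : (j : ℕ) + 1 < n then .A' i ⟨(j : ℕ) + 1, h⟩ else .A'fin

/-- One deterministic step of the transition system of the QBF instance `C`,
where the decision at variable `j` is `σ j`. -/
def TPStep {m n : ℕ} (C : Fin m → Fin n → Option Bool) (σ : Fin n → Bool) :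
    TPState m n → TPState m n
  | .s0 => .s0
  | .A i j => if σ j then .T i j else .F i j
  | .A' i j => if σ j then .T' i j else .F' i j
  | .T i j => .nextA i j
  | .F i j => .nextA i j
  | .T' i j => if C i j = some true then .nextA i j else .nextA' i j
  | .F' i j => if C i j = some false then .nextA i j else .nextA' i j
  | .Afin => .Afin
  | .A'fin => .A'fin

/-- Assignment `σ` satisfies clause `i` of the instance `C`. -/
def SatisfiesClause {m n : ℕ} (C : Fin m → Fin n → Option Bool)
    (σ : Fin n → Bool) (i : Fin m) : Prop :=
  ∃ j : Fin n, C i j = some (σ j)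

instance {m n : ℕ} (C : Fin m → Fin n → Option Bool) (σ : Fin n → Bool) (i : Fin m) :
    Decidable (SatisfiesClause C σ i) := by unfold SatisfiesClause; infer_instance

lemma two_step_A {m n : ℕ} (C : Fin m → Fin n → Option Bool) (σ : Fin n → Bool)
    (i : Fin m) (j : Fin n) :
    (TPStep C σ)^[2] (.A i j) = TPState.nextA i j := by
  show TPStep C σ (TPStep C σ (.A i j)) = _
  cases hσ : σ j <;> simp [TPStep, hσ]

lemma two_step_A' {m n : ℕ} (C : Fin m → Fin n → Option Bool) (σ : Fin n → Bool)
    (i : Fin m) (j : Fin n) :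
    (TPStep C σ)^[2] (.A' i j) =
      if C i j = some (σ j) then TPState.nextA i j else TPState.nextA' i j := by
  show TPStep C σ (TPStep C σ (.A' i j)) = _
  cases hσ : σ j <;> simp [TPStep, hσ]

lemma runA {m n : ℕ} (C : Fin m → Fin n → Option Bool) (σ : Fin n → Bool)
    (i : Fin m) : ∀ (k : ℕ) (j : Fin n), (j : ℕ) + 1 + k = n →
    (TPStep C σ)^[2 * k] (TPState.nextA i j) = .Afin := by
  intro k
  induction k with
  | zero =>
      intro j h
      simp only [Nat.mul_zero, Function.iterate_zero, id]
      unfold TPState.nextA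
      rw [dif_neg (by omega)]
  | succ k ih =>
      intro j h
      have hlt : (j : ℕ) + 1 < n := by omega
      have : TPState.nextA i j = TPState.A i ⟨(j : ℕ) + 1, hlt⟩ := by
        unfold TPState.nextA; rw [dif_pos hlt]
      rw [this]
      have : 2 * (k + 1) = 2 * k + 2 := by ring
      rw [this, Function.iterate_add_apply, two_step_A]
      exact ih ⟨(j : ℕ) + 1, hlt⟩ (by simp; omega)

lemma runA' {m n : ℕ} (C : Fin m → Fin n → Option Bool) (σ : Fin n → Bool)
    (i : Fin m) : ∀ (k : ℕ) (j : Fin n), (j : ℕ) + 1 + k = n →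
    (TPStep C σ)^[2 * (k + 1)] (TPState.A' i j) =
      if (∃ l : Fin n, j ≤ l ∧ C i l = some (σ l)) then TPState.Afin
      else TPState.A'fin := by
  intro k
  induction k with
  | zero =>
      intro j h
      show (TPStep C σ)^[2] _ = _
      rw [two_step_A']
      by_cases hC : C i j = some (σ j)
      · rw [if_pos hC, if_pos ⟨j, le_refl j, hC⟩]
        unfold TPState.nextA; rw [dif_neg (by omega)]
      · rw [if_neg hC, if_neg]
        · unfold TPState.nextA'; rw [dif_neg (by omega)]
        · rintro ⟨l, hjl, hl⟩
          have : l = j := Fin.ext (by have := l.isLt; have := (Fin.le_def.mp hjl); omega)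
          exact hC (this ▸ hl)
  | succ k ih =>
      intro j h
      have hlt : (j : ℕ) + 1 < n := by omega
      have hsplit : 2 * (k + 1 + 1) = 2 * (k + 1) + 2 := by ring
      rw [hsplit, Function.iterate_add_apply, two_step_A']
      by_cases hC : C i j = some (σ j)
      · rw [if_pos hC, if_pos ⟨j, le_refl j, hC⟩]
        exact runA C σ i (k + 1) j h
      · rw [if_neg hC]
        have : TPState.nextA' i j = TPState.A' i ⟨(j : ℕ) + 1, hlt⟩ := by
          unfold TPState.nextA'; rw [dif_pos hlt]
        rw [this, ih ⟨(j : ℕ) + 1, hlt⟩ (by simp; omega)]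
        congr 1
        apply propext
        constructor
        · rintro ⟨l, hjl, hl⟩
          exact ⟨l, le_trans (Fin.le_def.mpr (by simp)) hjl, hl⟩
        · rintro ⟨l, hjl, hl⟩
          rcases Nat.lt_or_ge (j : ℕ) (l : ℕ) with hc | hc
          · exact ⟨l, Fin.le_def.mpr (by simp; omega), hl⟩
          · have : l = j := Fin.ext (by have := Fin.le_def.mp hjl; omega)
            exact absurd (this ▸ hl) hC

/-- For every assignment `σ` and clause index `i`, the run of the
Tsitsiklis–Papadimitriou transition system started at `A'_{i1}` and evolving
according to `σ` reaches, after exactly `2n` steps, the state `A_{n+1}` if `σ`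
satisfies clause `i`, and the state `A'_{n+1}` otherwise. -/
theorem run_from_A'_reaches (m n : ℕ) (hm : 1 ≤ m) (hn : 1 ≤ n)
    (C : Fin m → Fin n → Option Bool) (σ : Fin n → Bool) (i : Fin m) :
    (TPStep C σ)^[2 * n] (.A' i ⟨0, hn⟩) =
      if SatisfiesClause C σ i then TPState.Afin else TPState.A'fin := by
  have h : 2 * n = 2 * ((n - 1) + 1) := by omega
  rw [h, runA' C σ i (n - 1) ⟨0, hn⟩ (by simp; omega)]
  congr 1
  apply propext
  constructor
  · rintro ⟨l, _, hl⟩; exact ⟨l, hl⟩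
  · rintro ⟨l, hl⟩; exact ⟨l, Fin.le_def.mpr (by simp), hl⟩
end

section
/- For every clause index i ∈ Fin m and every assignment σ : Fin n → Bool, the run of the Tsitsiklis–Papadimitriou transition system that starts at s_0, moves in one step to A'_{i1}, and thereafter evolves according to σ, is in the set {A_{n+1}, A'_{n+1}} after exactly 2n+1 steps, and is not in this set at any earlier time. -/
/-- For every clause index `i` and assignment `σ`, the run that starts
at `s_0`, moves in one step to `A'_{i1}`, and thereafter evolves according to `σ`, is in
`{A_{n+1}, A'_{n+1}}` after exactly `2n + 1` steps, and not earlier. -/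
theorem run_from_s0_hits_final_exactly (m n : ℕ) (hm : 1 ≤ m) (hn : 1 ≤ n)
    (C : Fin m → Fin n → Option Bool) (σ : Fin n → Bool) (i : Fin m) :
    ∀ run : ℕ → TPState m n,
      run 0 = TPState.s0 →
      (∀ k : ℕ, run (k + 1) = (TPStep C σ)^[k] (.A' i ⟨0, hn⟩)) →
      (run (2 * n + 1) = TPState.Afin ∨ run (2 * n + 1) = TPState.A'fin) ∧
      ∀ k < 2 * n + 1, run k ≠ TPState.Afin ∧ run k ≠ TPState.A'fin := by
  intro run h0 hrun
  set f := TPStep C σ with hf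
  set s : TPState m n := .A' i ⟨0, hn⟩ with hs
  have step2A : ∀ j : Fin n, f (f (.A i j)) = TPState.nextA i j := by
    intro j; simp only [hf, TPStep]; cases σ j <;> simp [TPStep]
  have step2A' : ∀ j : Fin n,
      f (f (.A' i j)) = TPState.nextA i j ∨ f (f (.A' i j)) = TPState.nextA' i j := by
    intro j; simp only [hf, TPStep]
    cases σ j <;> simp only [if_true, if_false, Bool.false_eq_true, TPStep]
    · by_cases h : C i j = some false <;> simp [h]
    · by_cases h : C i j = some true <;> simp [h]
  have key : ∀ k, k ≤ n →
      (∀ hk : k < n, f^[2*k] s = .A i ⟨k, hk⟩ ∨ f^[2*k] s = .A' i ⟨k, hk⟩) ∧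
      (k = n → f^[2*k] s = .Afin ∨ f^[2*k] s = .A'fin) := by
    intro k
    induction k with
    | zero =>
      intro _
      refine ⟨fun hk => Or.inr (by simp [s]), fun h => by omega⟩
    | succ k ih =>
      intro hk1
      have hklt : k < n := by omega
      have ih' := (ih (Nat.le_of_lt hklt)).1 hklt
      have hiter : f^[2*(k+1)] s = f (f (f^[2*k] s)) := by
        have h2 : 2*(k+1) = 1 + (1 + 2*k) := by ring
        rw [h2, Function.iterate_add_apply, Function.iterate_add_apply]
        simp only [Function.iterate_one]
      have hnext : f (f (f^[2*k] s)) = TPState.nextA i ⟨k, hklt⟩ ∨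
          f (f (f^[2*k] s)) = TPState.nextA' i ⟨k, hklt⟩ := by
        rcases ih' with h | h <;> rw [h]
        · exact Or.inl (step2A _)
        · exact step2A' _
      constructor
      · intro hk'
        rw [hiter]
        rcases hnext with h | h <;> rw [h]
        · left; simp [TPState.nextA, hk']
        · right; simp [TPState.nextA', hk']
      · intro heq
        have hnot : ¬ ((k : ℕ) + 1 < n) := by omega
        rw [hiter]
        rcases hnext with h | h <;> rw [h]
        · left; simp [TPState.nextA, hnot]
        · right; simp [TPState.nextA', hnot]
  constructor
  · rw [show 2*n+1 = 2*n + 1 from rfl, hrun (2*n)]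
    exact (key n le_rfl).2 rfl
  · intro k hk
    match k, hk with
    | 0, _ => rw [h0]; exact ⟨by simp, by simp⟩
    | (j+1), hk =>
      rw [hrun j]
      have hj : j < 2*n := by omega
      rcases Nat.even_or_odd j with ⟨t, ht⟩ | ⟨t, ht⟩
      · have htn : t < n := by omega
        have := (key t (Nat.le_of_lt htn)).1 htn
        have hjt : j = 2*t := by omega
        rw [hjt]
        rcases this with h | h <;> rw [h] <;> exact ⟨by simp, by simp⟩
      · have htn : t < n := by omega
        have h2t := (key t (Nat.le_of_lt htn)).1 htn
        have hjt : j = 1 + 2*t := by omega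
        rw [hjt, Function.iterate_add_apply, Function.iterate_one]
        rcases h2t with h | h <;> rw [h] <;>
          simp only [hf, TPStep] <;> cases σ ⟨t, htn⟩ <;> simp
end

section
/- The QBF instance is TRUE (under the alternating-quantifier semantics ∃x_1 ∀x_2 ∃x_3 … for the CNF formula with clauses C) if and only if there exists a feedback strategy g : List Obs → Bool such that for every clause index i ∈ Fin m and every assignment u of Boolean values to the universal (even-indexed) variables, the strategized run from A'_{i1} determined by g and u reaches the state A_{n+1} after 2n steps (and in particular never reaches A'_{n+1}). -/
/-- Observations: the state with the clause index hidden. -/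
inductive TPObs (n : ℕ) : Type where
  | s0 : TPObs n
  | A (j : Fin n) : TPObs n
  | A' (j : Fin n) : TPObs n
  | T (j : Fin n) : TPObs n
  | T' (j : Fin n) : TPObs n
  | F (j : Fin n) : TPObs n
  | F' (j : Fin n) : TPObs n
  | Afin : TPObs n
  | A'fin : TPObs n
  deriving DecidableEq

/-- The observation of a state hides the clause index. -/
def TPState.obs {m n : ℕ} : TPState m n → TPObs n
  | .s0 => .s0
  | .A _ j => .A j
  | .A' _ j => .A' j
  | .T _ j => .T j
  | .T' _ j => .T' j
  | .F _ j => .F j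
  | .F' _ j => .F' j
  | .Afin => .Afin
  | .A'fin => .A'fin

/-- Variable `x_{j+1}` (0-indexed `j`) is existential iff its 1-based index is odd,
i.e. iff `j` is even. -/
def Existential (j : ℕ) : Prop := j % 2 = 0

instance (j : ℕ) : Decidable (Existential j) := by unfold Existential; infer_instance

/-- The strategized run from state `s`, determined by the feedback strategy `g` and
the values `u` of the universal variables: the pair of the current state and the list
of observations of the states visited so far.  At a state in column `j`, the decision
used is `g` applied to the observation history if `x_{j+1}` is existential, and `u j`
if it is universal. -/
def stratRun {m n : ℕ} (C : Fin m → Fin n → Option Bool)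
    (g : List (TPObs n) → Bool) (u : Fin n → Bool) (s : TPState m n) :
    ℕ → TPState m n × List (TPObs n)
  | 0 => (s, [])
  | k + 1 =>
    let p := stratRun C g u s k
    let hist := p.2 ++ [p.1.obs]
    (TPStep C (fun j => if Existential (j : ℕ) then g hist else u j) p.1, hist)

/-- Truth of the quantified formula `∃x_1 ∀x_2 ∃x_3 ⋯ F(x_1, …, x_n)`, with the
variables `x_{j+1}, …, x_n` still to be quantified and `σ` recording the values
chosen so far. -/
def QBFAux {m n : ℕ} (C : Fin m → Fin n → Option Bool) (σ : Fin n → Bool) (j : ℕ) :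
    Prop :=
  if h : j < n then
    if Existential j then
      ∃ b : Bool, QBFAux C (Function.update σ ⟨j, h⟩ b) (j + 1)
    else
      ∀ b : Bool, QBFAux C (Function.update σ ⟨j, h⟩ b) (j + 1)
  else
    ∀ i : Fin m, SatisfiesClause C σ i
termination_by n - j

/-- The QBF instance `C` is TRUE under the alternating-quantifier semantics
`∃x_1 ∀x_2 ∃x_3 ⋯`. -/
def QBFTrue {m n : ℕ} (C : Fin m → Fin n → Option Bool) : Prop :=
  QBFAux C (fun _ => false) 0

section Aux
variable {m n : ℕ}

theorem qbf_congr (C : Fin m → Fin n → Option Bool) (j : ℕ) (σ σ' : Fin n → Bool)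
    (h : ∀ l : Fin n, (l : ℕ) < j → σ l = σ' l) : QBFAux C σ j ↔ QBFAux C σ' j := by
  by_cases hj : j < n
  · rw [QBFAux, QBFAux, dif_pos hj, dif_pos hj]
    have key : ∀ b : Bool, QBFAux C (Function.update σ ⟨j, hj⟩ b) (j+1) ↔
        QBFAux C (Function.update σ' ⟨j, hj⟩ b) (j+1) := by
      intro b
      apply qbf_congr
      intro l hl
      rcases eq_or_ne l ⟨j, hj⟩ with rfl | hne
      · simp
      · rw [Function.update_of_ne hne, Function.update_of_ne hne]
        apply h
        have : (l : ℕ) ≠ j := fun hc => hne (Fin.ext hc)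
        omega
    split
    · exact exists_congr key
    · exact forall_congr' key
  · have : σ = σ' := funext fun l => h l (lt_of_lt_of_le l.2 (le_of_not_gt hj))
    rw [this]
termination_by n - j

open Classical in
noncomputable def best (C : Fin m → Fin n → Option Bool) (σ : Fin n → Bool) (j : ℕ) : Bool :=
  if h : j < n then (if QBFAux C (Function.update σ ⟨j, h⟩ true) (j+1) then true else false)
  else false

theorem best_spec (C : Fin m → Fin n → Option Bool) (σ : Fin n → Bool) (j : ℕ) (h : j < n)
    (hE : Existential j) (hq : QBFAux C σ j) :
    QBFAux C (Function.update σ ⟨j, h⟩ (best C σ j)) (j+1) := by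
  rw [QBFAux, dif_pos h, if_pos hE] at hq
  obtain ⟨b, hb⟩ := hq
  unfold best
  rw [dif_pos h]
  by_cases ht : QBFAux C (Function.update σ ⟨j, h⟩ true) (j+1)
  · rw [if_pos ht]; exact ht
  · rw [if_neg ht]
    cases b with
    | true => exact absurd hb ht
    | false => exact hb

end Aux
section Run
variable {m n : ℕ}

def satB (C : Fin m → Fin n → Option Bool) (i : Fin m) (σ : Fin n → Bool) (k : ℕ) : Prop :=
  ∃ l : Fin n, (l : ℕ) < k ∧ C i l = some (σ l)

instance (C : Fin m → Fin n → Option Bool) (i : Fin m) (σ : Fin n → Bool) (k : ℕ) :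
    Decidable (satB C i σ k) := by unfold satB; infer_instance

def stateAt (C : Fin m → Fin n → Option Bool) (i : Fin m) (σ : Fin n → Bool) (k : ℕ) :
    TPState m n :=
  if hk : k < n then (if satB C i σ k then .A i ⟨k, hk⟩ else .A' i ⟨k, hk⟩)
  else (if satB C i σ k then .Afin else .A'fin)

def midAt (C : Fin m → Fin n → Option Bool) (i : Fin m) (σ : Fin n → Bool) (j : Fin n) :
    TPState m n :=
  if satB C i σ (j : ℕ) then (if σ j then .T i j else .F i j)
  else (if σ j then .T' i j else .F' i j)

def histAt (C : Fin m → Fin n → Option Bool) (i : Fin m) (σ : Fin n → Bool) :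
    ℕ → List (TPObs n)
  | 0 => []
  | (k+1) =>
    if hk : k < n then
      histAt C i σ k ++ [(stateAt C i σ k).obs, (midAt C i σ ⟨k, hk⟩).obs]
    else histAt C i σ k

theorem satB_zero (C : Fin m → Fin n → Option Bool) (i : Fin m) (σ : Fin n → Bool) :
    ¬ satB C i σ 0 := by rintro ⟨l, hl, -⟩; omega

theorem satB_succ (C : Fin m → Fin n → Option Bool) (i : Fin m) (σ : Fin n → Bool)
    (k : ℕ) (hk : k < n) :
    satB C i σ (k+1) ↔ satB C i σ k ∨ C i ⟨k, hk⟩ = some (σ ⟨k, hk⟩) := by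
  constructor
  · rintro ⟨l, hl, hc⟩
    rcases Nat.lt_or_ge (l : ℕ) k with h | h
    · exact Or.inl ⟨l, h, hc⟩
    · have : l = ⟨k, hk⟩ := Fin.ext (show (l:ℕ) = k by omega)
      exact Or.inr (this ▸ hc)
  · rintro (⟨l, hl, hc⟩ | hc)
    · exact ⟨l, by omega, hc⟩
    · exact ⟨⟨k, hk⟩, by simp, hc⟩

theorem run_eq (hn : 1 ≤ n) (C : Fin m → Fin n → Option Bool) (g : List (TPObs n) → Bool)
    (u : Fin n → Bool) (i : Fin m) (σ : Fin n → Bool)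
    (hcons : ∀ j : Fin n, σ j =
      if Existential (j : ℕ) then g (histAt C i σ (j : ℕ) ++ [(stateAt C i σ (j : ℕ)).obs])
      else u j) :
    ∀ k, k ≤ n → stratRun C g u (.A' i ⟨0, hn⟩) (2*k) = (stateAt C i σ k, histAt C i σ k) := by
  intro k
  induction k with
  | zero =>
    intro _
    have h0' : 0 < n := hn
    have h0 : stateAt C i σ 0 = .A' i ⟨0, hn⟩ := by
      rw [stateAt, dif_pos h0', if_neg (satB_zero C i σ)]
    simp [stratRun, histAt, h0]
  | succ k ih =>
    intro hk1
    have hk : k < n := hk1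
    have hrw : 2*(k+1) = (2*k) + 1 + 1 := by ring
    rw [hrw]
    have IH := ih (le_of_lt hk)
    -- step 1
    have hdec : (if Existential k then g (histAt C i σ k ++ [(stateAt C i σ k).obs]) else u ⟨k, hk⟩)
        = σ ⟨k, hk⟩ := (hcons ⟨k, hk⟩).symm
    have step1 : stratRun C g u (.A' i ⟨0, hn⟩) (2*k + 1) =
        (midAt C i σ ⟨k, hk⟩, histAt C i σ k ++ [(stateAt C i σ k).obs]) := by
      rw [stratRun, IH]
      simp only
      congr 1
      by_cases hs : satB C i σ k
      · have hst : stateAt C i σ k = .A i ⟨k, hk⟩ := by rw [stateAt, dif_pos hk, if_pos hs]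
        rw [hst] at hdec ⊢
        rw [TPStep]
        simp only [Fin.val_mk]
        rw [hdec, midAt, if_pos hs]
      · have hst : stateAt C i σ k = .A' i ⟨k, hk⟩ := by rw [stateAt, dif_pos hk, if_neg hs]
        rw [hst] at hdec ⊢
        rw [TPStep]
        simp only [Fin.val_mk]
        rw [hdec, midAt, if_neg hs]
    rw [stratRun, step1]
    simp only
    have hhist : histAt C i σ k ++ [(stateAt C i σ k).obs] ++ [(midAt C i σ ⟨k, hk⟩).obs]
        = histAt C i σ (k+1) := by
      rw [histAt, dif_pos hk, List.append_assoc]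
      rfl
    rw [hhist]
    congr 1
    -- step 2: from mid state to stateAt (k+1)
    rw [midAt]
    by_cases hs : satB C i σ k
    · have hs' : satB C i σ (k+1) := (satB_succ C i σ k hk).mpr (Or.inl hs)
      rw [if_pos hs]
      have : stateAt C i σ (k+1) = TPState.nextA i ⟨k, hk⟩ := by
        rw [stateAt, TPState.nextA]
        by_cases h2 : k + 1 < n
        · rw [dif_pos h2, dif_pos h2, if_pos hs']
        · rw [dif_neg h2, dif_neg h2, if_pos hs']
      cases hσ : σ ⟨k, hk⟩ <;> simp [TPStep, this]
    · rw [if_neg hs]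
      have hsucc := satB_succ C i σ k hk
      cases hσ : σ ⟨k, hk⟩ with
      | true =>
        rw [if_pos rfl, TPStep]
        by_cases hc : C i ⟨k, hk⟩ = some true
        · have hs' : satB C i σ (k+1) := hsucc.mpr (Or.inr (by rw [hσ]; exact hc))
          rw [if_pos hc, stateAt, TPState.nextA]
          by_cases h2 : k + 1 < n
          · rw [dif_pos h2, dif_pos h2, if_pos hs']
          · rw [dif_neg h2, dif_neg h2, if_pos hs']
        · have hs' : ¬ satB C i σ (k+1) := by
            rw [hsucc]; rintro (h | h)
            · exact hs h
            · rw [hσ] at h; exact hc h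
          rw [if_neg hc, stateAt, TPState.nextA']
          by_cases h2 : k + 1 < n
          · rw [dif_pos h2, dif_pos h2, if_neg hs']
          · rw [dif_neg h2, dif_neg h2, if_neg hs']
      | false =>
        rw [if_neg (by simp), TPStep]
        by_cases hc : C i ⟨k, hk⟩ = some false
        · have hs' : satB C i σ (k+1) := hsucc.mpr (Or.inr (by rw [hσ]; exact hc))
          rw [if_pos hc, stateAt, TPState.nextA]
          by_cases h2 : k + 1 < n
          · rw [dif_pos h2, dif_pos h2, if_pos hs']
          · rw [dif_neg h2, dif_neg h2, if_pos hs']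
        · have hs' : ¬ satB C i σ (k+1) := by
            rw [hsucc]; rintro (h | h)
            · exact hs h
            · rw [hσ] at h; exact hc h
          rw [if_neg hc, stateAt, TPState.nextA']
          by_cases h2 : k + 1 < n
          · rw [dif_pos h2, dif_pos h2, if_neg hs']
          · rw [dif_neg h2, dif_neg h2, if_neg hs']

end Run
section Extract
variable {m n : ℕ}

theorem histAt_length (C : Fin m → Fin n → Option Bool) (i : Fin m) (σ : Fin n → Bool) :
    ∀ k, k ≤ n → (histAt C i σ k).length = 2*k := by
  intro k
  induction k with
  | zero => intro _; simp [histAt]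
  | succ k ih =>
    intro hk1
    have hk : k < n := hk1
    rw [histAt, dif_pos hk]
    simp [ih (le_of_lt hk)]
    omega

theorem histAt_get (C : Fin m → Fin n → Option Bool) (i : Fin m) (σ : Fin n → Bool) :
    ∀ k, k ≤ n → ∀ l : Fin n, (l : ℕ) < k →
      (histAt C i σ k)[2*(l:ℕ)+1]? = some ((midAt C i σ l).obs) := by
  intro k
  induction k with
  | zero => intro _ l hl; omega
  | succ k ih =>
    intro hk1 l hl
    have hk : k < n := hk1
    rw [histAt, dif_pos hk]
    rcases Nat.lt_or_ge (l : ℕ) k with h | h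
    · rw [List.getElem?_append_left (by rw [histAt_length C i σ k (le_of_lt hk)]; omega)]
      exact ih (le_of_lt hk) l h
    · have hlval : (l:ℕ) = k := by omega
      have hlk : l = ⟨k, hk⟩ := Fin.ext hlval
      have hlen := histAt_length C i σ k (le_of_lt hk)
      rw [List.getElem?_append_right (by omega), hlen, hlval,
        show 2*k+1-2*k = 1 from by omega, hlk]
      rfl

def extract {n : ℕ} (hist : List (TPObs n)) (l : Fin n) : Bool :=
  match hist[2*(l:ℕ)+1]? with
  | some (TPObs.T _) => true
  | some (TPObs.T' _) => true
  | _ => false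

theorem extract_eq (C : Fin m → Fin n → Option Bool) (i : Fin m) (σ : Fin n → Bool)
    (k : ℕ) (hk : k ≤ n) (x : TPObs n) (l : Fin n) :
    extract (histAt C i σ k ++ [x]) l = if (l : ℕ) < k then σ l else false := by
  have hlen := histAt_length C i σ k hk
  by_cases hl : (l : ℕ) < k
  · rw [if_pos hl, extract]
    rw [List.getElem?_append_left (by omega)]
    rw [histAt_get C i σ k hk l hl]
    rw [midAt]
    by_cases hs : satB C i σ (l:ℕ) <;> cases hσ : σ l <;> simp [hs, hσ, TPState.obs]
  · rw [if_neg hl, extract]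
    have : (histAt C i σ k ++ [x])[2*(l:ℕ)+1]? = none := by
      apply List.getElem?_eq_none
      simp [hlen]
      omega
    rw [this]

end Extract
section Forward
variable {m n : ℕ}

noncomputable def sigS (C : Fin m → Fin n → Option Bool) (u : Fin n → Bool) : ℕ → Bool
  | j =>
    if Existential j then
      best C (fun l : Fin n => if h : (l : ℕ) < j then sigS C u (l : ℕ) else false) j
    else if h : j < n then u ⟨j, h⟩ else false
termination_by j => j
decreasing_by exact h

theorem sig_inv (C : Fin m → Fin n → Option Bool) (hT : QBFTrue C) (u : Fin n → Bool) :
    ∀ j, j ≤ n → QBFAux C (fun l : Fin n => if _h : (l : ℕ) < j then sigS C u (l:ℕ) else false) j := by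
  intro j
  induction j with
  | zero =>
    intro _
    have he : (fun l : Fin n => if _h : (l : ℕ) < 0 then sigS C u (l:ℕ) else false)
        = (fun _ => false) := funext fun l => dif_neg (by omega)
    rw [he]; exact hT
  | succ j ih =>
    intro hj1
    have hj : j < n := hj1
    have hq := ih (le_of_lt hj)
    set σ : Fin n → Bool := fun l => if _h : (l : ℕ) < j then sigS C u (l:ℕ) else false with hσdef
    by_cases hE : Existential j
    · have hb := best_spec C σ j hj hE hq
      have heq : Function.update σ ⟨j, hj⟩ (best C σ j)
          = fun l : Fin n => if _h : (l : ℕ) < j+1 then sigS C u (l:ℕ) else false := by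
        funext l
        rcases eq_or_ne l ⟨j, hj⟩ with rfl | hne
        · simp only [Function.update_self, Fin.val_mk]
          rw [dif_pos (Nat.lt_succ_self j)]
          show best C σ j = sigS C u j
          rw [sigS, if_pos hE, hσdef]
        · rw [Function.update_of_ne hne]
          have hlj : (l:ℕ) ≠ j := fun hc => hne (Fin.ext hc)
          show (if _h : (l:ℕ) < j then sigS C u (l:ℕ) else false)
            = if _h : (l:ℕ) < j+1 then sigS C u (l:ℕ) else false
          by_cases hl : (l:ℕ) < j
          · rw [dif_pos hl, dif_pos (by omega)]
          · rw [dif_neg hl, dif_neg (by omega)]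
      rwa [heq] at hb
    · rw [QBFAux, dif_pos hj, if_neg hE] at hq
      have hb := hq (sigS C u j)
      have heq : Function.update σ ⟨j, hj⟩ (sigS C u j)
          = fun l : Fin n => if _h : (l : ℕ) < j+1 then sigS C u (l:ℕ) else false := by
        funext l
        rcases eq_or_ne l ⟨j, hj⟩ with rfl | hne
        · simp only [Function.update_self, Fin.val_mk]
          rw [dif_pos (Nat.lt_succ_self j)]
        · rw [Function.update_of_ne hne]
          have hlj : (l:ℕ) ≠ j := fun hc => hne (Fin.ext hc)
          show (if _h : (l:ℕ) < j then sigS C u (l:ℕ) else false)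
            = if _h : (l:ℕ) < j+1 then sigS C u (l:ℕ) else false
          by_cases hl : (l:ℕ) < j
          · rw [dif_pos hl, dif_pos (by omega)]
          · rw [dif_neg hl, dif_neg (by omega)]
      rwa [heq] at hb

theorem forward_dir (hn : 1 ≤ n) (C : Fin m → Fin n → Option Bool) (hT : QBFTrue C) :
    ∃ g : List (TPObs n) → Bool, ∀ (i : Fin m) (u : Fin n → Bool),
      (stratRun C g u (.A' i ⟨0, hn⟩) (2 * n)).1 = TPState.Afin := by
  classical
  refine ⟨fun hist => best C (fun l => extract hist l) (hist.length / 2), ?_⟩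
  intro i u
  set g : List (TPObs n) → Bool :=
    fun hist => best C (fun l => extract hist l) (hist.length / 2) with hg
  set σ : Fin n → Bool := fun l => sigS C u (l:ℕ) with hσ
  have hcons : ∀ j : Fin n, σ j =
      if Existential (j:ℕ) then g (histAt C i σ (j:ℕ) ++ [(stateAt C i σ (j:ℕ)).obs])
      else u j := by
    intro j
    by_cases hE : Existential (j:ℕ)
    · rw [if_pos hE, hg]
      simp only
      have hlen : (histAt C i σ (j:ℕ) ++ [(stateAt C i σ (j:ℕ)).obs]).length = 2*(j:ℕ)+1 := by
        simp [histAt_length C i σ (j:ℕ) (le_of_lt j.2)]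
      rw [hlen, show (2*(j:ℕ)+1)/2 = (j:ℕ) from by omega]
      have hex : (fun l => extract (histAt C i σ (j:ℕ) ++ [(stateAt C i σ (j:ℕ)).obs]) l)
          = fun l : Fin n => if (l:ℕ) < (j:ℕ) then σ l else false :=
        funext fun l => extract_eq C i σ (j:ℕ) (le_of_lt j.2) _ l
      rw [hex]
      show sigS C u (j:ℕ) = _
      rw [sigS, if_pos hE]
      congr 1
    · rw [if_neg hE]
      show sigS C u (j:ℕ) = u j
      rw [sigS, if_neg hE, dif_pos j.2]
  have hrun := run_eq hn C g u i σ hcons n (le_refl n)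
  have h1 : (stratRun C g u (.A' i ⟨0, hn⟩) (2 * n)).1 = stateAt C i σ n := by rw [hrun]
  rw [h1]
  have hsat : satB C i σ n := by
    have hqn := sig_inv C hT u n (le_refl n)
    rw [QBFAux, dif_neg (lt_irrefl n)] at hqn
    obtain ⟨l, hc⟩ := hqn i
    refine ⟨l, l.2, ?_⟩
    show C i l = some (sigS C u (l:ℕ))
    simpa only [Fin.is_lt, dite_true] using hc
  rw [stateAt, dif_neg (lt_irrefl n), if_pos hsat]

end Forward
section Backward
variable {m n : ℕ}

def pHistOf (τ : ℕ → Bool) : ℕ → List (TPObs n)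
  | 0 => []
  | (k+1) =>
    if h : k < n then
      pHistOf τ k ++ [TPObs.A' ⟨k, h⟩, if τ k then TPObs.T' ⟨k, h⟩ else TPObs.F' ⟨k, h⟩]
    else pHistOf τ k

theorem pHistOf_congr (τ τ' : ℕ → Bool) : ∀ k, (∀ l, l < k → τ l = τ' l) →
    pHistOf (n := n) τ k = pHistOf τ' k := by
  intro k
  induction k with
  | zero => intro _; rfl
  | succ k ih =>
    intro h
    rw [pHistOf, pHistOf]
    have hk := ih (fun l hl => h l (by omega))
    by_cases hkn : k < n
    · rw [dif_pos hkn, dif_pos hkn, hk, h k (by omega)]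
    · rw [dif_neg hkn, dif_neg hkn, hk]

noncomputable def tau (C : Fin m → Fin n → Option Bool) (g : List (TPObs n) → Bool)
    (u : Fin n → Bool) : ℕ → Bool
  | j =>
    if h : j < n then
      if Existential j then
        g (pHistOf (fun l => if hl : l < j then tau C g u l else false) j ++ [TPObs.A' ⟨j, h⟩])
      else u ⟨j, h⟩
    else false
termination_by j => j
decreasing_by exact hl

theorem tau_unfold (C : Fin m → Fin n → Option Bool) (g : List (TPObs n) → Bool)
    (u : Fin n → Bool) (j : ℕ) (h : j < n) (hE : Existential j) :
    tau C g u j = g (pHistOf (tau C g u) j ++ [TPObs.A' ⟨j, h⟩]) := by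
  rw [tau, dif_pos h, if_pos hE,
    pHistOf_congr (fun l => if hl : l < j then tau C g u l else false) (tau C g u) j
      (fun l hl => dif_pos hl)]

theorem tau_congr (C : Fin m → Fin n → Option Bool) (g : List (TPObs n) → Bool)
    (u u' : Fin n → Bool) (K : ℕ) (hu : ∀ l : Fin n, (l:ℕ) < K → u l = u' l) :
    ∀ k, k < K → tau C g u k = tau C g u' k := by
  intro k
  induction k using Nat.strong_induction_on with
  | _ k ih =>
    intro hk
    rw [tau, tau]
    by_cases h : k < n
    · rw [dif_pos h, dif_pos h]
      by_cases hE : Existential k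
      · rw [if_pos hE, if_pos hE]
        have hp : pHistOf (n := n) (fun l => if hl : l < k then tau C g u l else false) k
            = pHistOf (fun l => if hl : l < k then tau C g u' l else false) k := by
          apply pHistOf_congr
          intro l hl
          rw [dif_pos hl, dif_pos hl, ih l hl (lt_trans hl hk)]
        rw [hp]
      · rw [if_neg hE, if_neg hE]
        exact hu ⟨k, h⟩ hk
    · rw [dif_neg h, dif_neg h]

theorem tau_sat (hn : 1 ≤ n) (C : Fin m → Fin n → Option Bool) (g : List (TPObs n) → Bool)
    (hyp : ∀ (i : Fin m) (u : Fin n → Bool),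
      (stratRun C g u (.A' i ⟨0, hn⟩) (2 * n)).1 = TPState.Afin)
    (u : Fin n → Bool) (i : Fin m) :
    SatisfiesClause C (fun l : Fin n => tau C g u (l:ℕ)) i := by
  by_contra hns
  set σ : Fin n → Bool := fun l => tau C g u (l:ℕ) with hσ
  have hnosat : ∀ k, ¬ satB C i σ k := by rintro k ⟨l, hl, hc⟩; exact hns ⟨l, hc⟩
  have hstate : ∀ k (hk : k < n), stateAt C i σ k = .A' i ⟨k, hk⟩ := fun k hk => by
    rw [stateAt, dif_pos hk, if_neg (hnosat k)]
  have hhist : ∀ k, k ≤ n → histAt C i σ k = pHistOf (tau C g u) k := by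
    intro k
    induction k with
    | zero => intro _; rfl
    | succ k ih =>
      intro hk1
      have hk : k < n := hk1
      rw [histAt, dif_pos hk, pHistOf, dif_pos hk, ih (le_of_lt hk), hstate k hk,
        midAt, if_neg (hnosat k)]
      have h3 : σ ⟨k, hk⟩ = tau C g u k := rfl
      cases h2 : tau C g u k
      · rw [h3, h2]; rfl
      · rw [h3, h2]; rfl
  have hcons : ∀ j : Fin n, σ j =
      if Existential (j:ℕ) then g (histAt C i σ (j:ℕ) ++ [(stateAt C i σ (j:ℕ)).obs])
      else u j := by
    intro j
    by_cases hE : Existential (j:ℕ)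
    · rw [if_pos hE, hhist (j:ℕ) (le_of_lt j.2), hstate (j:ℕ) j.2]
      show tau C g u (j:ℕ) = _
      rw [tau_unfold C g u (j:ℕ) j.2 hE]
      rfl
    · rw [if_neg hE]
      show tau C g u (j:ℕ) = u j
      rw [tau, dif_pos j.2, if_neg hE]
  have hrun := run_eq hn C g u i σ hcons n (le_refl n)
  have hfin := hyp i u
  rw [hrun] at hfin
  rw [stateAt, dif_neg (lt_irrefl n), if_neg (hnosat n)] at hfin
  exact absurd hfin (by simp)

theorem backB (hn : 1 ≤ n) (C : Fin m → Fin n → Option Bool) (g : List (TPObs n) → Bool)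
    (hyp : ∀ (i : Fin m) (u : Fin n → Bool),
      (stratRun C g u (.A' i ⟨0, hn⟩) (2 * n)).1 = TPState.Afin)
    (j : ℕ) (hj : j ≤ n) (u : Fin n → Bool) :
    QBFAux C (fun l : Fin n => if _h : (l:ℕ) < j then tau C g u (l:ℕ) else false) j := by
  by_cases h : j < n
  · rw [QBFAux, dif_pos h]
    by_cases hE : Existential j
    · rw [if_pos hE]
      refine ⟨tau C g u j, ?_⟩
      have heq : Function.update
          (fun l : Fin n => if _h : (l:ℕ) < j then tau C g u (l:ℕ) else false)
          ⟨j, h⟩ (tau C g u j)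
          = fun l : Fin n => if _h : (l:ℕ) < j+1 then tau C g u (l:ℕ) else false := by
        funext l
        rcases eq_or_ne l ⟨j, h⟩ with rfl | hne
        · simp only [Function.update_self, Fin.val_mk]
          rw [dif_pos (Nat.lt_succ_self j)]
        · rw [Function.update_of_ne hne]
          have hlj : (l:ℕ) ≠ j := fun hc => hne (Fin.ext hc)
          by_cases hl : (l:ℕ) < j
          · rw [dif_pos hl, dif_pos (by omega)]
          · rw [dif_neg hl, dif_neg (by omega)]
      rw [heq]
      exact backB hn C g hyp (j+1) h u
    · rw [if_neg hE]
      intro b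
      set u' := Function.update u ⟨j, h⟩ b with hu'
      have htc : ∀ l, l < j → tau C g u l = tau C g u' l := by
        intro l hl
        refine tau_congr C g u u' j ?_ l hl
        intro l' hl'
        have hne' : l' ≠ ⟨j, h⟩ := by
          intro hc
          rw [hc] at hl'
          simp only [Fin.val_mk] at hl'
          omega
        rw [hu', Function.update_of_ne hne']
      have heq : Function.update
          (fun l : Fin n => if _h : (l:ℕ) < j then tau C g u (l:ℕ) else false)
          ⟨j, h⟩ b
          = fun l : Fin n => if _h : (l:ℕ) < j+1 then tau C g u' (l:ℕ) else false := by
        funext l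
        rcases eq_or_ne l ⟨j, h⟩ with rfl | hne
        · simp only [Function.update_self, Fin.val_mk]
          rw [dif_pos (Nat.lt_succ_self j)]
          rw [tau, dif_pos h, if_neg hE, hu', Function.update_self]
        · rw [Function.update_of_ne hne]
          have hlj : (l:ℕ) ≠ j := fun hc => hne (Fin.ext hc)
          by_cases hl : (l:ℕ) < j
          · rw [dif_pos hl, dif_pos (by omega), htc (l:ℕ) hl]
          · rw [dif_neg hl, dif_neg (by omega)]
      rw [heq]
      exact backB hn C g hyp (j+1) h u'
  · have hjn : j = n := le_antisymm hj (le_of_not_gt h)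
    rw [QBFAux, dif_neg h]
    intro i
    obtain ⟨l, hc⟩ := tau_sat hn C g hyp u i
    refine ⟨l, ?_⟩
    show C i l = some (if _h : (l:ℕ) < j then tau C g u (l:ℕ) else false)
    rw [dif_pos (show (l:ℕ) < j from hjn ▸ l.2)]
    exact hc
termination_by n - j

end Backward
/-- The QBF instance is TRUE iff there is a feedback strategy `g`
such that for every clause index `i` and every assignment `u` of the universal
variables, the strategized run from `A'_{i1}` determined by `g` and `u` reaches the
state `A_{n+1}` after `2n` steps. -/
theorem qbf_true_iff_winning_strategy (m n : ℕ) (hm : 1 ≤ m) (hn : 1 ≤ n)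
    (C : Fin m → Fin n → Option Bool) :
    QBFTrue C ↔
      ∃ g : List (TPObs n) → Bool, ∀ (i : Fin m) (u : Fin n → Bool),
        (stratRun C g u (.A' i ⟨0, hn⟩) (2 * n)).1 = TPState.Afin := by
  constructor
  · exact fun hT => forward_dir hn C hT
  · rintro ⟨g, hyp⟩
    have h0 := backB hn C g hyp 0 (Nat.zero_le n) (fun _ => false)
    have he : (fun l : Fin n => if _h : (l:ℕ) < 0 then tau C g (fun _ => false) (l:ℕ) else false)
        = (fun _ => false) := funext fun l => dif_neg (by omega)
    rw [he] at h0
    exact h0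
end

section
/- If the QBF instance is FALSE, then for every feedback strategy g : List Obs → Bool there exist a clause index i ∈ Fin m and an assignment u of Boolean values to the universal variables such that the strategized run from A'_{i1} determined by g and u reaches the state A'_{n+1}; consequently, when i is chosen uniformly from Fin m and u uniformly from the 2^{⌊n/2⌋} universal assignments, the probability that the strategized run reaches A'_{n+1} is at least 2^{-n}/m. -/
/-- The observation history accumulated along the all-primed run up to column `j`. -/
def primedHist {n : ℕ} (σ : Fin n → Bool) : ℕ → List (TPObs n)
  | 0 => []
  | j + 1 => primedHist σ j ++ if h : j < n then
      [TPObs.A' ⟨j, h⟩, if σ ⟨j, h⟩ then TPObs.T' ⟨j, h⟩ else TPObs.F' ⟨j, h⟩] else []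

lemma primedHist_congr {n : ℕ} {σ τ : Fin n → Bool} (j : ℕ)
    (h : ∀ l (hl : l < n), l < j → σ ⟨l, hl⟩ = τ ⟨l, hl⟩) :
    primedHist σ j = primedHist τ j := by
  induction j with
  | zero => rfl
  | succ j ih =>
    simp only [primedHist]
    rw [ih (fun l hl hlj => h l hl (hlj.trans (Nat.lt_succ_self j)))]
    congr 1
    split
    · next hj => rw [h j hj (Nat.lt_succ_self j)]
    · rfl

/-- Given a false residual QBF, extend the partial assignment to a full assignment
consistent with the strategy `g` on existential variables, falsifying some clause. -/
lemma exists_bad_assignment {m n : ℕ} (C : Fin m → Fin n → Option Bool)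
    (g : List (TPObs n) → Bool) :
    ∀ (fuel j : ℕ), n - j ≤ fuel → ∀ σ : Fin n → Bool,
      (∀ l (hl : l < n), l < j → Existential l →
        σ ⟨l, hl⟩ = g (primedHist σ l ++ [.A' ⟨l, hl⟩])) →
      ¬ QBFAux C σ j →
      ∃ τ : Fin n → Bool,
        (∀ l (hl : l < n), Existential l →
          τ ⟨l, hl⟩ = g (primedHist τ l ++ [.A' ⟨l, hl⟩])) ∧
        ∃ i, ¬ SatisfiesClause C τ i := by
  intro fuel
  induction fuel with
  | zero =>
    intro j hj σ hcons hF
    have hjn : n ≤ j := Nat.le_of_sub_eq_zero (Nat.le_zero.mp hj)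
    rw [QBFAux] at hF
    rw [dif_neg (by omega)] at hF
    push_neg at hF
    exact ⟨σ, fun l hl hex => hcons l hl (lt_of_lt_of_le hl hjn) hex, hF⟩
  | succ fuel ih =>
    intro j hj σ hcons hF
    by_cases hjn : j < n
    · rw [QBFAux, dif_pos hjn] at hF
      have hfuel : n - (j + 1) ≤ fuel := by omega
      by_cases hex : Existential j
      · rw [if_pos hex] at hF
        push_neg at hF
        set b := g (primedHist σ j ++ [.A' ⟨j, hjn⟩]) with hb
        have hF' := hF b
        refine ih (j + 1) hfuel (Function.update σ ⟨j, hjn⟩ b) ?_ hF'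
        intro l hl hlj hexl
        have hph : primedHist (Function.update σ ⟨j, hjn⟩ b) l = primedHist σ l := by
          refine primedHist_congr l (fun l' hl' hl'l => ?_)
          rw [Function.update_of_ne]
          intro hcontra
          have : l' = j := by simpa [Fin.ext_iff] using hcontra
          omega
        rcases Nat.lt_succ_iff_lt_or_eq.mp hlj with hlt | heq
        · rw [hph]
          rw [Function.update_of_ne (by simp [Fin.ext_iff]; omega)]
          exact hcons l hl hlt hexl
        · subst heq
          rw [hph]
          have h2 : (⟨l, hl⟩ : Fin n) = ⟨l, hjn⟩ := rfl
          rw [h2, Function.update_self]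
      · rw [if_neg hex] at hF
        push_neg at hF
        obtain ⟨b, hF'⟩ := hF
        refine ih (j + 1) hfuel (Function.update σ ⟨j, hjn⟩ b) ?_ hF'
        intro l hl hlj hexl
        have hlt : l < j := by
          rcases Nat.lt_succ_iff_lt_or_eq.mp hlj with h | h
          · exact h
          · exact absurd (h ▸ hexl) hex
        have hph : primedHist (Function.update σ ⟨j, hjn⟩ b) l = primedHist σ l := by
          refine primedHist_congr l (fun l' hl' hl'l => ?_)
          rw [Function.update_of_ne]
          intro hcontra
          have : l' = j := by simpa [Fin.ext_iff] using hcontra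
          omega
        rw [hph, Function.update_of_ne (by simp [Fin.ext_iff]; omega)]
        exact hcons l hl hlt hexl
    · rw [QBFAux, dif_neg hjn] at hF
      push_neg at hF
      exact ⟨σ, fun l hl hex => hcons l hl (by omega) hex, hF⟩

/-- If `τ` falsifies clause `i` and is consistent with `g`, the strategized run from
`A'_{i,1}` with universal values `τ` stays in the primed chain. -/
lemma run_stays_primed {m n : ℕ} (hn : 1 ≤ n) (C : Fin m → Fin n → Option Bool)
    (g : List (TPObs n) → Bool) (τ : Fin n → Bool) (i : Fin m)
    (hcons : ∀ l (hl : l < n), Existential l →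
      τ ⟨l, hl⟩ = g (primedHist τ l ++ [.A' ⟨l, hl⟩]))
    (hbad : ¬ SatisfiesClause C τ i) :
    ∀ j, j ≤ n → stratRun C g τ (.A' i ⟨0, hn⟩) (2 * j) =
      (if h : j < n then .A' i ⟨j, h⟩ else .A'fin, primedHist τ j) := by
  intro j
  induction j with
  | zero =>
    intro _
    have h0 : 0 < n := hn
    rw [dif_pos h0]
    rfl
  | succ j ih =>
    intro hj1
    have hjn : j < n := by omega
    have h2 : 2 * (j + 1) = (2 * j) + 1 + 1 := by ring
    have hIH := ih (le_of_lt hjn)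
    have hdecv : (if Existential j then g (primedHist τ j ++ [TPObs.A' ⟨j, hjn⟩])
        else τ ⟨j, hjn⟩) = τ ⟨j, hjn⟩ := by
      by_cases hex : Existential j
      · rw [if_pos hex]
        exact (hcons j hjn hex).symm
      · rw [if_neg hex]
    have hCne : C i ⟨j, hjn⟩ ≠ some (τ ⟨j, hjn⟩) := fun hc => hbad ⟨⟨j, hjn⟩, hc⟩
    rw [h2]
    cases hτj : τ ⟨j, hjn⟩ with
    | true =>
      have hstep1 : stratRun C g τ (.A' i ⟨0, hn⟩) (2 * j + 1) =
          (TPState.T' i ⟨j, hjn⟩, primedHist τ j ++ [TPObs.A' ⟨j, hjn⟩]) := by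
        rw [stratRun, hIH]
        simp only [dif_pos hjn, TPState.obs, TPStep]
        rw [hdecv, hτj]
        simp
      rw [stratRun, hstep1]
      simp only [TPState.obs, TPStep]
      rw [if_neg (show C i ⟨j, hjn⟩ ≠ some true by rw [← hτj]; exact hCne)]
      simp only [TPState.nextA']
      congr 1
      simp [primedHist, hjn, hτj]
    | false =>
      have hstep1 : stratRun C g τ (.A' i ⟨0, hn⟩) (2 * j + 1) =
          (TPState.F' i ⟨j, hjn⟩, primedHist τ j ++ [TPObs.A' ⟨j, hjn⟩]) := by
        rw [stratRun, hIH]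
        simp only [dif_pos hjn, TPState.obs, TPStep]
        rw [hdecv, hτj]
        simp
      rw [stratRun, hstep1]
      simp only [TPState.obs, TPStep]
      rw [if_neg (show C i ⟨j, hjn⟩ ≠ some false by rw [← hτj]; exact hCne)]
      simp only [TPState.nextA']
      congr 1
      simp [primedHist, hjn, hτj]

/-- If the QBF instance is FALSE then for every feedback strategy `g`
there are a clause index `i` and an assignment `u` of the universal variables such that
the strategized run from `A'_{i1}` reaches `A'_{n+1}`; consequently, when the pair
`(i, u)` is chosen uniformly, the probability that the strategized run reaches
`A'_{n+1}` is at least `2^{-n}/m`. -/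
theorem qbf_false_implies_bad_state_reached (m n : ℕ) (hm : 1 ≤ m) (hn : 1 ≤ n)
    (C : Fin m → Fin n → Option Bool) (hF : ¬ QBFTrue C) :
    ∀ g : List (TPObs n) → Bool,
      (∃ (i : Fin m) (u : Fin n → Bool) (k : ℕ),
          (stratRun C g u (.A' i ⟨0, hn⟩) k).1 = TPState.A'fin) ∧
      ((Set.ncard {p : Fin m × (Fin n → Bool) | ∃ k : ℕ,
            (stratRun C g p.2 (.A' p.1 ⟨0, hn⟩) k).1 = TPState.A'fin} : ℝ)
          / ((m : ℝ) * 2 ^ n) ≥ (2 : ℝ) ^ (-(n : ℝ)) / m) := by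
  
  intro g
  have key : ∃ (i : Fin m) (u : Fin n → Bool) (k : ℕ),
      (stratRun C g u (.A' i ⟨0, hn⟩) k).1 = TPState.A'fin := by
    obtain ⟨τ, hcons, i, hbad⟩ :=
      exists_bad_assignment C g n 0 (by omega) (fun _ => false)
        (fun l hl hl0 _ => absurd hl0 (Nat.not_lt_zero l)) hF
    refine ⟨i, τ, 2 * n, ?_⟩
    rw [run_stays_primed hn C g τ i hcons hbad n le_rfl]
    simp
  refine ⟨key, ?_⟩
  obtain ⟨i, u, k, hk⟩ := key
  set S := {p : Fin m × (Fin n → Bool) | ∃ k : ℕ,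
      (stratRun C g p.2 (.A' p.1 ⟨0, hn⟩) k).1 = TPState.A'fin}
  have hSne : S.Nonempty := ⟨(i, u), k, hk⟩
  have hS1 : 1 ≤ S.ncard := by
    rw [Nat.one_le_iff_ne_zero]
    intro h0
    rw [Set.ncard_eq_zero (Set.toFinite S)] at h0
    exact Set.not_nonempty_empty (h0 ▸ hSne)
  have hS1' : (1 : ℝ) ≤ (S.ncard : ℝ) := by exact_mod_cast hS1
  have hmpos : (0 : ℝ) < m := by exact_mod_cast hm
  have hpow : (2 : ℝ) ^ (-(n : ℝ)) = ((2 : ℝ) ^ (n : ℕ))⁻¹ := by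
    rw [← Real.rpow_natCast 2 n, ← Real.rpow_neg (by norm_num)]
  have hpos : (0 : ℝ) < (m : ℝ) * 2 ^ n := by positivity
  rw [ge_iff_le, hpow, div_le_div_iff₀ hmpos hpos]
  calc ((2 : ℝ) ^ (n : ℕ))⁻¹ * ((m : ℝ) * 2 ^ n) = m := by
        field_simp
    _ ≤ (S.ncard : ℝ) * m := by nlinarith
end

section
/- For every real α > 0 there exists N : ℕ such that for all natural numbers m ≥ N and n ≥ N, setting a = ((2:ℝ)^(-(n:ℝ))/m) · 2^((m·n)^200), b = (1 − (2:ℝ)^(-(n:ℝ))/m) · 2^((m·n)^100), and c = 2·n + 1, one has (b + c · Real.logb 2 (6·m·n + 3)) / (a + b + c) < α. -/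
set_option maxRecDepth 100000
set_option maxHeartbeats 2000000
open Real


/-- For every `α > 0` there exists `N` such that for all
`m, n ≥ N`, the rate bound `(b + c · log₂(6mn + 3)) / (a + b + c)` with
`a = (2^{-n}/m) · 2^{(mn)^{200}}`, `b = (1 - 2^{-n}/m) · 2^{(mn)^{100}}` and
`c = 2n + 1`, is below `α`. -/
theorem rate_bound_small (α : ℝ) (hα : 0 < α) :
    ∃ N : ℕ, ∀ m n : ℕ, N ≤ m → N ≤ n →
      ((((1 - (2 : ℝ) ^ (-(n : ℝ)) / m) * 2 ^ ((m * n) ^ 100))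
          + (2 * (n : ℝ) + 1) * Real.logb 2 (6 * (m : ℝ) * n + 3)) /
        ((((2 : ℝ) ^ (-(n : ℝ)) / m) * 2 ^ ((m * n) ^ 200))
          + ((1 - (2 : ℝ) ^ (-(n : ℝ)) / m) * 2 ^ ((m * n) ^ 100))
          + (2 * (n : ℝ) + 1)))
        < α := by
  obtain ⟨N₀, hN₀⟩ := exists_nat_gt (1 / α)
  refine ⟨N₀ + 54, fun m n hm hn => ?_⟩
  have hm54 : 54 ≤ m := le_trans (by omega) hm
  have hn54 : 54 ≤ n := le_trans (by omega) hn
  have hm1 : 1 ≤ m := by omega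
  have hn1 : 1 ≤ n := by omega
  have hm0 : (0:ℝ) < m := by exact_mod_cast hm1
  have hn0 : (0:ℝ) < n := by exact_mod_cast hn1
  obtain ⟨k, hk⟩ : ∃ k : ℕ, (m * n) ^ 100 = k := ⟨_, rfl⟩
  have hk200 : (m * n) ^ 200 = k ^ 2 := by rw [← hk, ← pow_mul]
  rw [hk200, hk]
  have hmn1 : 1 ≤ m * n := Nat.one_le_iff_ne_zero.mpr (by positivity)
  have hmn54 : 54 ≤ m * n := le_trans hm54 (Nat.le_mul_of_pos_right m (by omega))
  have hmnk : m * n ≤ k := hk ▸ Nat.le_self_pow (by norm_num) _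
  have hmk : m ≤ k := le_trans (Nat.le_mul_of_pos_right m (by omega)) hmnk
  have hnk : n ≤ k := le_trans (Nat.le_mul_of_pos_left n (by omega)) hmnk
  have hNk : N₀ + 54 ≤ k := le_trans hm hmk
  have h54k : 54 ≤ k := le_trans hm54 hmk
  -- basic positivity facts
  have hP0 : (0:ℝ) < (2:ℝ) ^ (-(n:ℝ)) / m :=
    div_pos (Real.rpow_pos_of_pos two_pos _) hm0
  have h2n1 : (2:ℝ) ^ (-(n:ℝ)) ≤ 1 :=
    Real.rpow_le_one_of_one_le_of_nonpos one_le_two (neg_nonpos.mpr (Nat.cast_nonneg n))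
  have hP1 : (2:ℝ) ^ (-(n:ℝ)) / m ≤ 1 := by
    rw [div_le_one hm0]
    calc (2:ℝ) ^ (-(n:ℝ)) ≤ 1 := h2n1
      _ ≤ m := by exact_mod_cast hm1
  have hB0 : (0:ℝ) < (2:ℝ) ^ k := by positivity
  have hA0 : (0:ℝ) < (2:ℝ) ^ (k ^ 2) := by positivity
  have hC0 : (0:ℝ) < 2 * (n:ℝ) + 1 := by positivity
  have hD0 : (0:ℝ) < (((2:ℝ) ^ (-(n:ℝ)) / m) * 2 ^ (k ^ 2))
      + ((1 - (2:ℝ) ^ (-(n:ℝ)) / m) * 2 ^ k) + (2 * (n:ℝ) + 1) := by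
    have h1 : 0 < ((2:ℝ) ^ (-(n:ℝ)) / m) * 2 ^ (k ^ 2) := mul_pos hP0 hA0
    have h2 : 0 ≤ (1 - (2:ℝ) ^ (-(n:ℝ)) / m) * 2 ^ k :=
      mul_nonneg (by linarith) hB0.le
    linarith
  rw [div_lt_iff₀ hD0]
  -- bound the log term
  have hy1 : (1:ℝ) ≤ 6 * (m:ℝ) * n + 3 := by nlinarith
  have hlog : Real.logb 2 (6 * (m:ℝ) * n + 3) ≤ 2 * (6 * (m:ℝ) * n + 3) := by
    have h1 : Real.log (6 * (m:ℝ) * n + 3) ≤ 6 * (m:ℝ) * n + 3 :=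
      Real.log_le_self (by linarith)
    have h2 : (0.6931471803:ℝ) < Real.log 2 := Real.log_two_gt_d9
    rw [Real.logb, div_le_iff₀ (by linarith)]
    nlinarith
  have hCL : (2 * (n:ℝ) + 1) * Real.logb 2 (6 * (m:ℝ) * n + 3)
      ≤ (2 * (n:ℝ) + 1) * (2 * (6 * (m:ℝ) * n + 3)) :=
    mul_le_mul_of_nonneg_left hlog hC0.le
  -- nat bound: (2n+1)(12mn+6) ≤ k ≤ 2^k
  have hnat : (2 * n + 1) * (12 * m * n + 6) ≤ k := by
    have h3 : (2 * n + 1) * (12 * m * n + 6) ≤ (m * n) ^ 3 := by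
      calc (2 * n + 1) * (12 * m * n + 6)
          ≤ (3 * n) * (18 * (m * n)) := by
            apply Nat.mul_le_mul
            · omega
            · have : 12 * m * n = 12 * (m * n) := by ring
              omega
        _ = (54 * n) * (m * n) := by ring
        _ ≤ ((m * n) * (m * n)) * (m * n) :=
            Nat.mul_le_mul (Nat.mul_le_mul hmn54 (Nat.le_mul_of_pos_left n (by omega))) le_rfl
        _ = (m * n) ^ 3 := by ring
    calc (2 * n + 1) * (12 * m * n + 6) ≤ (m * n) ^ 3 := h3
      _ ≤ (m * n) ^ 100 := Nat.pow_le_pow_right hmn1 (by norm_num)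
      _ = k := hk
  have hnat2 : (2 * n + 1) * (12 * m * n + 6) ≤ 2 ^ k :=
    hnat.trans (Nat.lt_two_pow_self (n := k)).le
  have hnumB : (2 * (n:ℝ) + 1) * (2 * (6 * (m:ℝ) * n + 3)) ≤ (2:ℝ) ^ k := by
    have h' : (((2 * n + 1) * (12 * m * n + 6) : ℕ) : ℝ) ≤ ((2 ^ k : ℕ) : ℝ) :=
      Nat.cast_le.mpr hnat2
    push_cast at h'
    nlinarith [h']
  have hNm : (1 - (2:ℝ) ^ (-(n:ℝ)) / m) * 2 ^ k
      + (2 * (n:ℝ) + 1) * Real.logb 2 (6 * (m:ℝ) * n + 3) ≤ 2 * (2:ℝ) ^ k := by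
    have h1 : (1 - (2:ℝ) ^ (-(n:ℝ)) / m) * 2 ^ k ≤ 1 * (2:ℝ) ^ k :=
      mul_le_mul_of_nonneg_right (by linarith) hB0.le
    have h2 := hCL.trans hnumB
    linarith
  -- lower bound for P
  have hmlt : (m:ℝ) ≤ (2:ℝ) ^ ((m:ℕ):ℝ) := by
    have h' : ((m:ℕ):ℝ) < ((2 ^ m : ℕ) : ℝ) := Nat.cast_lt.mpr (Nat.lt_two_pow_self (n := m))
    push_cast at h'
    rw [Real.rpow_natCast]
    linarith
  have hPlb : (2:ℝ) ^ (-(n:ℝ) - (m:ℝ)) ≤ (2:ℝ) ^ (-(n:ℝ)) / m := by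
    rw [Real.rpow_sub two_pos]
    apply div_le_div_of_nonneg_left (Real.rpow_pos_of_pos two_pos _).le hm0
    exact hmlt
  -- key strict inequality
  have hexp : (k:ℝ) + 1 + ((N₀:ℝ) + 54) ≤ ((k^2 : ℕ):ℝ) - (n:ℝ) - (m:ℝ) := by
    have hkk : 54 * k ≤ k ^ 2 := by rw [pow_two]; exact Nat.mul_le_mul_right k h54k
    have he5 : k + 1 + n + m + (N₀ + 54) ≤ 54 * k := by omega
    have he : k + 1 + n + m + (N₀ + 54) ≤ k ^ 2 := le_trans he5 hkk
    have he' : ((k + 1 + n + m + (N₀ + 54) : ℕ):ℝ) ≤ ((k^2 : ℕ):ℝ) := Nat.cast_le.mpr he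
    push_cast at he' ⊢
    linarith
  have h2N : 1 / α < (2:ℝ) ^ (((N₀ + 54 : ℕ)):ℝ) := by
    have h2 : (((N₀ + 54 : ℕ)):ℝ) < ((2 ^ (N₀ + 54) : ℕ):ℝ) :=
      Nat.cast_lt.mpr Nat.lt_two_pow_self
    push_cast at h2
    rw [Real.rpow_natCast]
    push_cast
    linarith
  have hsmall : (2:ℝ) ^ (((k:ℝ) + 1) - (((k^2 : ℕ):ℝ) - (n:ℝ) - (m:ℝ))) < α := by
    have h1 : ((k:ℝ) + 1) - (((k^2 : ℕ):ℝ) - (n:ℝ) - (m:ℝ)) ≤ -(((N₀ + 54 : ℕ)):ℝ) := by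
      push_cast at hexp ⊢
      linarith
    calc (2:ℝ) ^ (((k:ℝ) + 1) - (((k^2 : ℕ):ℝ) - (n:ℝ) - (m:ℝ)))
        ≤ (2:ℝ) ^ (-(((N₀ + 54 : ℕ)):ℝ)) := Real.rpow_le_rpow_of_exponent_le one_le_two h1
      _ < α := by
          rw [Real.rpow_neg (by norm_num : (0:ℝ) ≤ 2)]
          have hx : (0:ℝ) < (2:ℝ) ^ (((N₀ + 54 : ℕ)):ℝ) := Real.rpow_pos_of_pos two_pos _
          rw [inv_lt_iff_one_lt_mul₀ hx]
          have := (div_lt_iff₀ hα).mp h2N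
          nlinarith
  have hkey : 2 * (2:ℝ) ^ k < α * ((2:ℝ) ^ (-(n:ℝ) - (m:ℝ)) * 2 ^ (k ^ 2)) := by
    have hL : 2 * (2:ℝ) ^ k = (2:ℝ) ^ ((k:ℝ) + 1) := by
      rw [Real.rpow_add two_pos, Real.rpow_one, Real.rpow_natCast]
      ring
    have hR : (2:ℝ) ^ (-(n:ℝ) - (m:ℝ)) * 2 ^ (k ^ 2)
        = (2:ℝ) ^ ((((k^2 : ℕ):ℝ) - (n:ℝ) - (m:ℝ))) := by
      rw [← Real.rpow_natCast 2 (k ^ 2), ← Real.rpow_add two_pos]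
      congr 1
      ring
    rw [hL, hR]
    have hpos : (0:ℝ) < (2:ℝ) ^ ((((k^2 : ℕ):ℝ) - (n:ℝ) - (m:ℝ))) :=
      Real.rpow_pos_of_pos two_pos _
    rw [← div_lt_iff₀ hpos]
    rw [← Real.rpow_sub two_pos]
    exact hsmall
  -- assemble
  have hfin : α * ((2:ℝ) ^ (-(n:ℝ) - (m:ℝ)) * 2 ^ (k ^ 2))
      ≤ α * ((((2:ℝ) ^ (-(n:ℝ)) / m) * 2 ^ (k ^ 2))
          + ((1 - (2:ℝ) ^ (-(n:ℝ)) / m) * 2 ^ k) + (2 * (n:ℝ) + 1)) := by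
    apply mul_le_mul_of_nonneg_left _ hα.le
    have h1 : (2:ℝ) ^ (-(n:ℝ) - (m:ℝ)) * 2 ^ (k ^ 2)
        ≤ ((2:ℝ) ^ (-(n:ℝ)) / m) * 2 ^ (k ^ 2) :=
      mul_le_mul_of_nonneg_right hPlb hA0.le
    have h2 : 0 ≤ (1 - (2:ℝ) ^ (-(n:ℝ)) / m) * 2 ^ k := mul_nonneg (by linarith) hB0.le
    linarith
  calc (1 - (2:ℝ) ^ (-(n:ℝ)) / m) * 2 ^ k
        + (2 * (n:ℝ) + 1) * Real.logb 2 (6 * (m:ℝ) * n + 3)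
      ≤ 2 * (2:ℝ) ^ k := hNm
    _ < α * ((2:ℝ) ^ (-(n:ℝ) - (m:ℝ)) * 2 ^ (k ^ 2)) := hkey
    _ ≤ _ := hfin
end
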